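/- arXiv:2104.00655 — 5 statements merged into one kernel-verified Lean document; each statement's English description precedes it below -/
import Mathlib

section
/- Let ρ ∈ (-1,1), σ₂ > 0, σ₀ᵧ² = (1+σ₂²)/(1-ρ²). Define aVar_LP(h) = σ₀ᵧ²(1-ρ^{2(h+1)}) - ρ^{2h} and, for h ≥ 1, aVar_VAR(h) = ρ^{2(h-1)}(1-ρ²)σ₀ᵧ²(1 + (h-1)²/(σ₀ᵧ²-1)) + ρ^{2h}σ₂². Then aVar_LP(1) = aVar_VAR(1). -/
theorem stmt_2_general (ρ σ₂ : ℝ) (hρ : ρ ∈ Set.Ioo (-1 : ℝ) 1)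
    (σ0 : ℝ) (hσ0 : σ0 = (1 + σ₂ ^ 2) / (1 - ρ ^ 2))
    (aVarLP aVarVAR : ℕ → ℝ)
    (hLP : ∀ h : ℕ, aVarLP h = σ0 * (1 - ρ ^ (2 * (h + 1))) - ρ ^ (2 * h))
    (hVAR : ∀ h : ℕ, 1 ≤ h →
      aVarVAR h = ρ ^ (2 * (h - 1)) * (1 - ρ ^ 2) * σ0 * (1 + ((h : ℝ) - 1) ^ 2 / (σ0 - 1))
        + ρ ^ (2 * h) * σ₂ ^ 2) :
    aVarLP 1 = aVarVAR 1 := by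
  have hρ_sq : ρ ^ 2 < 1 := (sq_lt_one_iff_abs_lt_one ρ).mpr (abs_lt.mpr hρ)
  have hσ0_mul : σ0 * (1 - ρ ^ 2) = 1 + σ₂ ^ 2 := by
    rw [hσ0]
    exact div_mul_cancel₀ _ (sub_ne_zero.mpr hρ_sq.ne')
  -- At h = 1 the term (h - 1)² / (σ0 - 1) vanishes,
  -- and the two sides differ by ρ² (σ0 (1 - ρ²) - 1 - σ₂²).
  rw [hLP 1, hVAR 1 le_rfl]
  norm_num
  linear_combination ρ ^ 2 * hσ0_mul

theorem stmt_2 (ρ σ₂ : ℝ) (hρ : ρ ∈ Set.Ioo (-1 : ℝ) 1) (hσ : 0 < σ₂)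
    (σ0 : ℝ) (hσ0 : σ0 = (1 + σ₂ ^ 2) / (1 - ρ ^ 2))
    (aVarLP aVarVAR : ℕ → ℝ)
    (hLP : ∀ h : ℕ, aVarLP h = σ0 * (1 - ρ ^ (2 * (h + 1))) - ρ ^ (2 * h))
    (hVAR : ∀ h : ℕ, 1 ≤ h →
      aVarVAR h = ρ ^ (2 * (h - 1)) * (1 - ρ ^ 2) * σ0 * (1 + ((h : ℝ) - 1) ^ 2 / (σ0 - 1))
        + ρ ^ (2 * h) * σ₂ ^ 2) :
    aVarLP 1 = aVarVAR 1 :=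
  stmt_2_general ρ σ₂ hρ σ0 hσ0 aVarLP aVarVAR hLP hVAR
end

section
/- Let ρ ∈ (-1,1) with ρ ≠ 0, σ₂ > 0, σ₀ᵧ² = (1+σ₂²)/(1-ρ²), aBias_VAR(h) = ρ^{h-1}(h-1)·ασ₂²/(σ₀ᵧ²-1), and aVar_VAR(h) = ρ^{2(h-1)}(1-ρ²)σ₀ᵧ²(1 + (h-1)²/(σ₀ᵧ²-1)) + ρ^{2h}σ₂². Then aBias_VAR(h)² + aVar_VAR(h) → 0 as h → ∞, while aVar_LP(h) = σ₀ᵧ²(1-ρ^{2(h+1)}) - ρ^{2h} → σ₀ᵧ² > 0. -/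
/-!
Both VAR terms are, after the shift `h = n + 1`, of the form `(a + b n²) (ρ²)ⁿ`: a quadratic
polynomial against a geometric decay, hence they tend to `0` since `ρ² < 1`. The local-projection
variance differs from `σ0` by a multiple of `(ρ²)ʰ`, so it tends to `σ0`, which is positive as a
quotient of positive numbers.
-/

open Filter Topology

lemma tendsto_quadratic_mul_geometric_atTop_zero {r : ℝ} (hr : |r| < 1) (a b : ℝ) :
    Tendsto (fun n : ℕ => (a + b * (n : ℝ) ^ 2) * r ^ n) atTop (𝓝 0) := by
  have hconst := (tendsto_pow_const_mul_const_pow_of_abs_lt_one 0 hr).const_mul a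
  have hquad := (tendsto_pow_const_mul_const_pow_of_abs_lt_one 2 hr).const_mul b
  simpa [add_mul, mul_assoc] using hconst.add hquad

lemma abs_sq_lt_one {ρ : ℝ} (hρ : ρ ∈ Set.Ioo (-1 : ℝ) 1) : |ρ ^ 2| < 1 := by
  rw [abs_of_nonneg (sq_nonneg ρ), sq_lt_one_iff_abs_lt_one, abs_lt]
  exact hρ

theorem stmt_3_general (ρ σ₂ α : ℝ) (hρ : ρ ∈ Set.Ioo (-1 : ℝ) 1)
    (σ0 : ℝ) (hσ0 : σ0 = (1 + σ₂ ^ 2) / (1 - ρ ^ 2))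
    (aBiasVAR aVarVAR aVarLP : ℕ → ℝ)
    (hBias : ∀ h : ℕ, 1 ≤ h →
      aBiasVAR h = ρ ^ (h - 1) * ((h : ℝ) - 1) * (α * σ₂ ^ 2 / (σ0 - 1)))
    (hVar : ∀ h : ℕ, 1 ≤ h →
      aVarVAR h = ρ ^ (2 * (h - 1)) * (1 - ρ ^ 2) * σ0 * (1 + ((h : ℝ) - 1) ^ 2 / (σ0 - 1))
        + ρ ^ (2 * h) * σ₂ ^ 2)
    (hLP : ∀ h : ℕ, aVarLP h = σ0 * (1 - ρ ^ (2 * (h + 1))) - ρ ^ (2 * h)) :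
    Tendsto (fun h : ℕ => (aBiasVAR h) ^ 2 + aVarVAR h) atTop (𝓝 0) ∧
      Tendsto aVarLP atTop (𝓝 σ0) ∧ 0 < σ0 := by
  have hr := abs_sq_lt_one hρ
  have hσ0_pos : 0 < σ0 := by
    have : 0 < 1 - ρ ^ 2 := by linarith [(abs_lt.mp hr).2]
    rw [hσ0]; positivity
  refine ⟨?_, ?_, hσ0_pos⟩
  · rw [← tendsto_add_atTop_iff_nat 1]
    refine (tendsto_quadratic_mul_geometric_atTop_zero hr
      ((1 - ρ ^ 2) * σ0 + ρ ^ 2 * σ₂ ^ 2)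
      ((α * σ₂ ^ 2 / (σ0 - 1)) ^ 2 + (1 - ρ ^ 2) * σ0 / (σ0 - 1))).congr fun n => ?_
    rw [hBias _ (Nat.le_add_left 1 n), hVar _ (Nat.le_add_left 1 n), Nat.add_sub_cancel, pow_mul, pow_mul]
    push_cast
    ring
  · have hgeom := tendsto_pow_atTop_nhds_zero_of_abs_lt_one hr
    have hlim := tendsto_const_nhds (x := σ0) |>.sub (hgeom.const_mul (σ0 * ρ ^ 2 + 1))
    rw [mul_zero, sub_zero] at hlim
    refine hlim.congr fun h => ?_
    rw [hLP, pow_mul, pow_mul]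
    ring

theorem stmt_3 (ρ σ₂ α : ℝ) (hρ : ρ ∈ Set.Ioo (-1 : ℝ) 1) (hρ0 : ρ ≠ 0) (hσ : 0 < σ₂)
    (σ0 : ℝ) (hσ0 : σ0 = (1 + σ₂ ^ 2) / (1 - ρ ^ 2))
    (aBiasVAR aVarVAR aVarLP : ℕ → ℝ)
    (hBias : ∀ h : ℕ, 1 ≤ h →
      aBiasVAR h = ρ ^ (h - 1) * ((h : ℝ) - 1) * (α * σ₂ ^ 2 / (σ0 - 1)))
    (hVar : ∀ h : ℕ, 1 ≤ h →
      aVarVAR h = ρ ^ (2 * (h - 1)) * (1 - ρ ^ 2) * σ0 * (1 + ((h : ℝ) - 1) ^ 2 / (σ0 - 1))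
        + ρ ^ (2 * h) * σ₂ ^ 2)
    (hLP : ∀ h : ℕ, aVarLP h = σ0 * (1 - ρ ^ (2 * (h + 1))) - ρ ^ (2 * h)) :
    Tendsto (fun h : ℕ => (aBiasVAR h) ^ 2 + aVarVAR h) atTop (𝓝 0) ∧
      Tendsto aVarLP atTop (𝓝 σ0) ∧ 0 < σ0 :=
  stmt_3_general ρ σ₂ α hρ σ0 hσ0 aBiasVAR aVarVAR aVarLP hBias hVar hLP
end

section
/- Let ρ ∈ (-1,1), ρ ≠ 0, α ≠ 0, σ₂ > 0, σ₀ᵧ² = (1+σ₂²)/(1-ρ²). For every integer h ≥ 2, the VAR asymptotic bias aBias_VAR(h) = ρ^{h-1}(h-1)·ασ₂²/(σ₀ᵧ²-1) is nonzero, while the LP asymptotic bias is 0. -/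
/-- Equality would force `s ^ 2 = -r ^ 2`; at `r ^ 2 = 1` the quotient is the junk value `0`. -/
lemma one_add_sq_div_one_sub_sq_ne_one {r s : ℝ} (hs : s ≠ 0) :
    (1 + s ^ 2) / (1 - r ^ 2) ≠ 1 := by
  intro h
  have hden : 1 - r ^ 2 ≠ 0 := by
    rintro hzero
    simp [hzero] at h
  rw [div_eq_one_iff_eq hden] at h
  have : 0 < s ^ 2 := by positivity
  nlinarith [sq_nonneg r]

theorem stmt_4_general (ρ σ₂ α : ℝ) (hρ0 : ρ ≠ 0) (hα : α ≠ 0)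
    (hσ : 0 < σ₂) (σ0 : ℝ) (hσ0 : σ0 = (1 + σ₂ ^ 2) / (1 - ρ ^ 2))
    (aBiasVAR aBiasLP : ℕ → ℝ)
    (hBias : ∀ h : ℕ, 1 ≤ h →
      aBiasVAR h = ρ ^ (h - 1) * ((h : ℝ) - 1) * (α * σ₂ ^ 2 / (σ0 - 1)))
    (hBiasLP : ∀ h : ℕ, aBiasLP h = 0) :
    ∀ h : ℕ, 2 ≤ h → aBiasVAR h ≠ 0 ∧ aBiasLP h = 0 := by
  intro h hh
  refine ⟨?_, hBiasLP h⟩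
  have hσ0_sub : σ0 - 1 ≠ 0 :=
    sub_ne_zero.mpr (hσ0 ▸ one_add_sq_div_one_sub_sq_ne_one hσ.ne')
  have hh_sub : (h : ℝ) - 1 ≠ 0 := by
    have : (2 : ℝ) ≤ h := by exact_mod_cast hh
    linarith
  rw [hBias h (by omega)]
  exact mul_ne_zero (mul_ne_zero (pow_ne_zero _ hρ0) hh_sub)
    (div_ne_zero (mul_ne_zero hα (pow_ne_zero 2 hσ.ne')) hσ0_sub)

theorem stmt_4 (ρ σ₂ α : ℝ) (hρ : ρ ∈ Set.Ioo (-1 : ℝ) 1) (hρ0 : ρ ≠ 0) (hα : α ≠ 0)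
    (hσ : 0 < σ₂) (σ0 : ℝ) (hσ0 : σ0 = (1 + σ₂ ^ 2) / (1 - ρ ^ 2))
    (aBiasVAR aBiasLP : ℕ → ℝ)
    (hBias : ∀ h : ℕ, 1 ≤ h →
      aBiasVAR h = ρ ^ (h - 1) * ((h : ℝ) - 1) * (α * σ₂ ^ 2 / (σ0 - 1)))
    (hBiasLP : ∀ h : ℕ, aBiasLP h = 0) :
    ∀ h : ℕ, 2 ≤ h → aBiasVAR h ≠ 0 ∧ aBiasLP h = 0 :=
  stmt_4_general ρ σ₂ α hρ0 hα hσ σ0 hσ0 aBiasVAR aBiasLP hBias hBiasLP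
end

section
/- Let ρ ∈ (-1,1), σ₂ > 0, σ₀ᵧ² = (1+σ₂²)/(1-ρ²). For every h ≥ 2 with ρ ≠ 0, aVar_VAR(h) = ρ^{2(h-1)}(1-ρ²)σ₀ᵧ²(1 + (h-1)²/(σ₀ᵧ²-1)) + ρ^{2h}σ₂² < aVar_LP(h) = σ₀ᵧ²(1-ρ^{2(h+1)}) - ρ^{2h}. -/
/-!
Write `r = ρ ^ 2`, `s = σ₂ ^ 2` and `h = n + 1`. Clearing denominators, the LP variance exceeds the
VAR variance by `(1 + s) * ((r + s) * (1 - r ^ n) - n ^ 2 * (1 - r) ^ 2 * r ^ n) / ((1 - r) * (r + s))`,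
so it suffices that `n ^ 2 * (1 - r) ^ 2 * r ^ n ≤ r * (1 - r ^ n)` for `0 ≤ r ≤ 1`. This follows by
induction on `n` from `(2 n + 1) (1 - r) r ^ n ≤ 1`, which in turn is `(1 - r)` times the AM-GM bound
`(2 n + 1) r ^ n ≤ ∑ i ≤ 2 n, r ^ i` obtained by pairing `r ^ i` with `r ^ (2 n - i)`.
-/

open Finset

theorem two_mul_pow_le_pow_add_pow {r : ℝ} (hr : 0 ≤ r) {i j n : ℕ} (hij : i + j = 2 * n) :
    2 * r ^ n ≤ r ^ i + r ^ j := by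
  wlog hle : i ≤ j generalizing i j
  · linarith [this (j := i) (i := j) (by omega) (by omega)]
  obtain ⟨d, rfl⟩ : ∃ d, n = i + d := ⟨n - i, by omega⟩
  obtain rfl : j = i + d + d := by omega
  have hsq : 0 ≤ r ^ i * (1 - r ^ d) ^ 2 := by positivity
  linear_combination hsq

theorem odd_mul_pow_le_geom_sum {r : ℝ} (hr : 0 ≤ r) (n : ℕ) :
    (2 * n + 1) * r ^ n ≤ ∑ i ∈ range (2 * n + 1), r ^ i := by
  have hreflect : ∑ i ∈ range (2 * n + 1), r ^ (2 * n - i) = ∑ i ∈ range (2 * n + 1), r ^ i :=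
    sum_range_reflect (r ^ ·) (2 * n + 1)
  have hpair : ∑ i ∈ range (2 * n + 1), 2 * r ^ n
      ≤ ∑ i ∈ range (2 * n + 1), (r ^ i + r ^ (2 * n - i)) :=
    sum_le_sum fun i hi => two_mul_pow_le_pow_add_pow hr (by simp at hi; omega)
  rw [sum_add_distrib, hreflect, sum_const, card_range, nsmul_eq_mul] at hpair
  push_cast at hpair
  linarith

theorem odd_mul_one_sub_mul_pow_le_one {r : ℝ} (hr₀ : 0 ≤ r) (hr₁ : r ≤ 1) (n : ℕ) :
    (2 * n + 1) * (1 - r) * r ^ n ≤ 1 := by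
  have hgeom : (∑ i ∈ range (2 * n + 1), r ^ i) * (1 - r) = 1 - r ^ (2 * n + 1) := by
    rw [← neg_sub r, mul_neg, geom_sum_mul]; ring
  nlinarith [mul_le_mul_of_nonneg_right (odd_mul_pow_le_geom_sum hr₀ n) (sub_nonneg.2 hr₁),
    pow_nonneg hr₀ (2 * n + 1)]

theorem sq_mul_one_sub_sq_mul_pow_le {r : ℝ} (hr₀ : 0 ≤ r) (hr₁ : r ≤ 1) (n : ℕ) :
    (n : ℝ) ^ 2 * (1 - r) ^ 2 * r ^ n ≤ r * (1 - r ^ n) := by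
  induction n with
  | zero => simp
  | succ n ih =>
    -- with `f n := r * (1 - r ^ n) - n ^ 2 * (1 - r) ^ 2 * r ^ n`, one has
    -- `f (n + 1) = r * f n + r * (1 - r) * (1 - (2 * n + 1) * (1 - r) * r ^ n)`
    have hstep : 0 ≤ r * (1 - r) * (1 - (2 * n + 1) * (1 - r) * r ^ n) :=
      mul_nonneg (mul_nonneg hr₀ (sub_nonneg.2 hr₁))
        (sub_nonneg.2 (odd_mul_one_sub_mul_pow_le_one hr₀ hr₁ n))
    have hrec := mul_le_mul_of_nonneg_left ih hr₀
    push_cast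
    linear_combination hrec + hstep

theorem stmt_5_general (ρ σ₂ : ℝ) (hρ : ρ ∈ Set.Ioo (-1 : ℝ) 1) (hσ : 0 < σ₂)
    (σ0 : ℝ) (hσ0 : σ0 = (1 + σ₂ ^ 2) / (1 - ρ ^ 2)) :
    ∀ h : ℕ, 2 ≤ h →
      ρ ^ (2 * (h - 1)) * (1 - ρ ^ 2) * σ0 * (1 + ((h : ℝ) - 1) ^ 2 / (σ0 - 1))
          + ρ ^ (2 * h) * σ₂ ^ 2
        < σ0 * (1 - ρ ^ (2 * (h + 1))) - ρ ^ (2 * h) := by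
  intro h hh
  obtain ⟨n, rfl⟩ : ∃ n, h = n + 1 := ⟨h - 1, by omega⟩
  set r := ρ ^ 2 with hr
  set s := σ₂ ^ 2
  have hr₀ : 0 ≤ r := sq_nonneg ρ
  have hr₁ : r < 1 := by rw [hr, sq_lt_one_iff_abs_lt_one, abs_lt]; exact hρ
  have hs : 0 < s := by positivity
  have hrn : r ^ n < 1 := pow_lt_one₀ hr₀ hr₁ (by omega)
  have hkey : (n : ℝ) ^ 2 * (1 - r) ^ 2 * r ^ n < (r + s) * (1 - r ^ n) := by
    linarith [sq_mul_one_sub_sq_mul_pow_le hr₀ hr₁.le n, mul_pos hs (sub_pos.2 hrn)]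
  have h1r : 0 < 1 - r := by linarith
  have hrs : 0 < r + s := by linarith
  have hσ0_sub : σ0 - 1 = (r + s) / (1 - r) := by
    rw [hσ0]; field_simp; ring
  simp only [pow_mul, Nat.add_sub_cancel, ← hr]
  push_cast
  rw [add_sub_cancel_right, hσ0_sub, hσ0, ← sub_pos]
  have hgap : 0 < (1 + s) * ((r + s) * (1 - r ^ n) - n ^ 2 * (1 - r) ^ 2 * r ^ n)
      / ((1 - r) * (r + s)) := by
    have hnum : 0 < (r + s) * (1 - r ^ n) - n ^ 2 * (1 - r) ^ 2 * r ^ n := sub_pos.2 hkey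
    positivity
  convert hgap using 1
  field_simp
  ring

theorem stmt_5 (ρ σ₂ : ℝ) (hρ : ρ ∈ Set.Ioo (-1 : ℝ) 1) (hρ0 : ρ ≠ 0) (hσ : 0 < σ₂)
    (σ0 : ℝ) (hσ0 : σ0 = (1 + σ₂ ^ 2) / (1 - ρ ^ 2)) :
    ∀ h : ℕ, 2 ≤ h →
      ρ ^ (2 * (h - 1)) * (1 - ρ ^ 2) * σ0 * (1 + ((h : ℝ) - 1) ^ 2 / (σ0 - 1))
          + ρ ^ (2 * h) * σ₂ ^ 2
        < σ0 * (1 - ρ ^ (2 * (h + 1))) - ρ ^ (2 * h) :=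
  stmt_5_general ρ σ₂ hρ hσ σ0 hσ0
end

section
/- Let ρ ∈ (0,1), σ₂ > 0, and σ₀ᵧ² = (1+σ₂²)/(1-ρ²). Then aVar_VAR(2) < aVar_LP(2), where aVar_VAR(2) = ρ²(1-ρ²)σ₀ᵧ²(1 + 1/(σ₀ᵧ²-1)) + ρ⁴σ₂² and aVar_LP(2) = σ₀ᵧ²(1-ρ⁶) - ρ⁴. -/
/-!
Write `d = 1 - ρ²`, `s = 1 + σ₂²` and `q = σ₂² + ρ²`, so that `σ0 = s / d`, `σ0 - 1 = q / d` and
`s = q + d`. Then `1 + 1 / (σ0 - 1) = s / q`, the VAR variance collapses to `ρ² s² / q + ρ⁴ σ₂²`, and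
`1 - ρ⁶ = d (1 + ρ² + ρ⁴)` turns the LP variance into `s (1 + ρ² + ρ⁴) - ρ⁴`. Their difference is
`s (σ₂² + ρ⁴) / q`, which is positive.
-/

section Identities

variable {K : Type*} [Field K]

def aVarVAR (ρ σ₂ σ0 : K) : K :=
  ρ ^ 2 * (1 - ρ ^ 2) * σ0 * (1 + 1 / (σ0 - 1)) + ρ ^ 4 * σ₂ ^ 2

def aVarLP (ρ σ0 : K) : K :=
  σ0 * (1 - ρ ^ 6) - ρ ^ 4

theorem one_add_one_div_sub_one {x : K} (hx : x - 1 ≠ 0) : 1 + 1 / (x - 1) = x / (x - 1) := by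
  field_simp
  ring

theorem div_one_sub_sq_sub_one {ρ σ₂ : K} (hd : 1 - ρ ^ 2 ≠ 0) :
    (1 + σ₂ ^ 2) / (1 - ρ ^ 2) - 1 = (σ₂ ^ 2 + ρ ^ 2) / (1 - ρ ^ 2) := by
  field_simp
  ring

theorem aVarVAR_eq {ρ σ₂ : K} (hd : 1 - ρ ^ 2 ≠ 0) (hq : σ₂ ^ 2 + ρ ^ 2 ≠ 0) :
    aVarVAR ρ σ₂ ((1 + σ₂ ^ 2) / (1 - ρ ^ 2))
      = ρ ^ 2 * (1 + σ₂ ^ 2) ^ 2 / (σ₂ ^ 2 + ρ ^ 2) + ρ ^ 4 * σ₂ ^ 2 := by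
  have hsub := div_one_sub_sq_sub_one (σ₂ := σ₂) hd
  rw [aVarVAR, one_add_one_div_sub_one (hsub ▸ div_ne_zero hq hd), hsub]
  field_simp

theorem aVarLP_eq {ρ σ₂ : K} (hd : 1 - ρ ^ 2 ≠ 0) :
    aVarLP ρ ((1 + σ₂ ^ 2) / (1 - ρ ^ 2)) = (1 + σ₂ ^ 2) * (1 + ρ ^ 2 + ρ ^ 4) - ρ ^ 4 := by
  rw [aVarLP, show 1 - ρ ^ 6 = (1 - ρ ^ 2) * (1 + ρ ^ 2 + ρ ^ 4) by ring]
  field_simp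

theorem aVarLP_sub_aVarVAR {ρ σ₂ : K} (hd : 1 - ρ ^ 2 ≠ 0) (hq : σ₂ ^ 2 + ρ ^ 2 ≠ 0) :
    aVarLP ρ ((1 + σ₂ ^ 2) / (1 - ρ ^ 2)) - aVarVAR ρ σ₂ ((1 + σ₂ ^ 2) / (1 - ρ ^ 2))
      = (1 + σ₂ ^ 2) * (σ₂ ^ 2 + ρ ^ 4) / (σ₂ ^ 2 + ρ ^ 2) := by
  rw [aVarLP_eq hd, aVarVAR_eq hd hq]
  field_simp
  ring

end Identities

theorem stmt_18_general (ρ σ₂ : ℝ) (hρ : ρ ∈ Set.Ioo (0 : ℝ) 1)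
    (σ0 : ℝ) (hσ0 : σ0 = (1 + σ₂ ^ 2) / (1 - ρ ^ 2)) :
    ρ ^ 2 * (1 - ρ ^ 2) * σ0 * (1 + 1 / (σ0 - 1)) + ρ ^ 4 * σ₂ ^ 2
      < σ0 * (1 - ρ ^ 6) - ρ ^ 4 := by
  obtain ⟨hρ0, hρ1⟩ := hρ
  have hd : 1 - ρ ^ 2 ≠ 0 := by nlinarith
  have hq : 0 < σ₂ ^ 2 + ρ ^ 2 := by positivity
  suffices 0 < aVarLP ρ σ0 - aVarVAR ρ σ₂ σ0 from sub_pos.mp this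
  rw [hσ0, aVarLP_sub_aVarVAR hd hq.ne']
  positivity

theorem stmt_18 (ρ σ₂ : ℝ) (hρ : ρ ∈ Set.Ioo (0 : ℝ) 1) (hσ : 0 < σ₂)
    (σ0 : ℝ) (hσ0 : σ0 = (1 + σ₂ ^ 2) / (1 - ρ ^ 2)) :
    ρ ^ 2 * (1 - ρ ^ 2) * σ0 * (1 + 1 / (σ0 - 1)) + ρ ^ 4 * σ₂ ^ 2
      < σ0 * (1 - ρ ^ 6) - ρ ^ 4 :=
  stmt_18_general ρ σ₂ hρ σ0 hσ0
end
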